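/- Let $\{a_n\},\{b_n\},\{c_n\},\{d_n\}$ be real sequences with $1\le a_n\le b_n$ for all $n$, $\psi:\mathbb{N}\to[0,\infty)$, and $s\in(0,1)$. If $\sum_{n\in\mathbb{N}}b_n(\psi(n)/b_n)^s<\infty$, then $\mathcal{H}^{1+s}(M_2(\psi))=0$, where $M_2(\psi)=\{(x,y)\in[0,1]^2:\|a_nx+c_n\|\cdot\|b_ny+d_n\|<\psi(n)\text{ for infinitely many }n\}$. -/

import Mathlib

/-!
Write `u = ‖a x + c‖` and `v = ‖b y + d‖`. If `uv < ψ ≤ 1/2`, then for some `k ≤ K ≈ log₂ (1/ψ)`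
the point lies in the box `{u ≤ 2⁻ᵏ} × {v ≤ 2ψ 2ᵏ}`. Such a box is the product of `≲ a` intervals
of length `2δ/a` with `≲ b` intervals of length `2δ'/b` (`δ = 2⁻ᵏ`, `δ' = 2ψ 2ᵏ`); cutting both
into intervals of the smaller length `ℓ` covers it by squares of total `(1+s)`-cost
`≲ δδ' ℓ^(s-1) ≲ ψ b^(1-s) (δ^(s-1) + δ'^(s-1))`. Summing the two geometric series over `k`
bounds the cost of the `n`-th set by a constant times `b (ψ/b)^s`, with diameters `≲ √ψ → 0`.
The convergence half of Borel–Cantelli, applied to the outer measures `H^(1+s)_r`, finishes.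
-/

open Set MeasureTheory
open scoped ENNReal

/-- Distance from `x` to the nearest integer. -/
noncomputable def nint (x : ℝ) : ℝ := |x - round x|

open Filter Topology Metric

section Hausdorff

variable {X : Type*} [EMetricSpace X]

-- `H^d_r`: covers by sets of diameter at most `r` only; `μH[d]` is its limit as `r → 0`.
noncomputable def hausdorffApprox (d : ℝ) (r : ℝ≥0∞) : OuterMeasure X :=
  OuterMeasure.mkMetric'.pre (fun s => ediam s ^ d) r

theorem hausdorffApprox_le_ediam_rpow {d : ℝ} {r : ℝ≥0∞} {s : Set X} (hs : ediam s ≤ r) :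
    hausdorffApprox d r s ≤ ediam s ^ d :=
  OuterMeasure.mkMetric'.pre_le hs

variable [MeasurableSpace X] [BorelSpace X]

theorem hausdorffMeasure_eq_zero_of_hausdorffApprox {d : ℝ} {s : Set X}
    (h : ∀ r > 0, hausdorffApprox d r s = 0) : μH[d] s = 0 := by
  rw [Measure.hausdorffMeasure, ← OuterMeasure.coe_mkMetric]
  refine tendsto_nhds_unique (OuterMeasure.mkMetric'.tendsto_pre _ s)
    (tendsto_const_nhds.congr' ?_)
  filter_upwards [self_mem_nhdsWithin] with r hr using (h r hr).symm

theorem hausdorffMeasure_limsup_eq_zero {d : ℝ} {E : ℕ → Set X} {B : ℕ → ℝ≥0∞}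
    (hB : ∑' n, B n ≠ ∞) (hE : ∀ r > 0, ∀ᶠ n in atTop, hausdorffApprox d r (E n) ≤ B n) :
    μH[d] (limsup E atTop) = 0 := by
  refine hausdorffMeasure_eq_zero_of_hausdorffApprox fun r hr => ?_
  obtain ⟨N₀, hN₀⟩ := eventually_atTop.1 (hE r hr)
  refine le_zero_iff.1 (ge_of_tendsto (ENNReal.tendsto_sum_nat_add B hB) ?_)
  filter_upwards [eventually_ge_atTop N₀] with N hN
  calc hausdorffApprox d r (limsup E atTop)
      ≤ hausdorffApprox d r (⋃ i, E (i + N)) := by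
        refine measure_mono ?_
        rw [limsup_eq_iInf_iSup_of_nat']
        exact iInter_subset _ N
    _ ≤ ∑' i, hausdorffApprox d r (E (i + N)) := measure_iUnion_le _
    _ ≤ ∑' i, B (i + N) := ENNReal.tsum_le_tsum fun i => hN₀ _ (by omega)

end Hausdorff

def CoverableByIntervals (A : Set ℝ) (ℓ N : ℝ) : Prop :=
  ∃ P : Finset ℝ, (P.card : ℝ) ≤ N ∧ A ⊆ ⋃ p ∈ P, Icc p (p + ℓ)

section CoverableByIntervals

variable {A : Set ℝ} {w ℓ N : ℝ}

theorem CoverableByIntervals.mono {N' : ℝ} (h : CoverableByIntervals A ℓ N) (hN : N ≤ N') :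
    CoverableByIntervals A ℓ N' :=
  let ⟨P, hP, hAP⟩ := h
  ⟨P, hP.trans hN, hAP⟩

theorem coverableByIntervals_Icc (p : ℝ) (hw : 0 ≤ w) (hℓ : 0 < ℓ) :
    CoverableByIntervals (Icc p (p + w)) ℓ (w / ℓ + 1) := by
  refine ⟨(Finset.range (⌊w / ℓ⌋₊ + 1)).image fun j : ℕ => p + j * ℓ, ?_, ?_⟩
  · calc (((Finset.range (⌊w / ℓ⌋₊ + 1)).image fun j : ℕ => p + j * ℓ).card : ℝ)
        ≤ (Finset.range (⌊w / ℓ⌋₊ + 1)).card := by exact_mod_cast Finset.card_image_le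
      _ ≤ w / ℓ + 1 := by
        rw [Finset.card_range, Nat.cast_succ]
        linarith [Nat.floor_le (div_nonneg hw hℓ.le)]
  · intro x hx
    set j := ⌊(x - p) / ℓ⌋₊
    have hj₁ : j * ℓ ≤ x - p :=
      (le_div_iff₀ hℓ).1 (Nat.floor_le (div_nonneg (by linarith [hx.1]) hℓ.le))
    have hj₂ : x - p < (j + 1) * ℓ := (div_lt_iff₀ hℓ).1 (Nat.lt_floor_add_one _)
    have hjw : j ≤ ⌊w / ℓ⌋₊ :=
      Nat.floor_le_floor (div_le_div_of_nonneg_right (by linarith [hx.2]) hℓ.le)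
    refine mem_iUnion₂.2 ⟨p + j * ℓ, Finset.mem_image.2 ⟨j, by simp; omega, rfl⟩, ?_, ?_⟩ <;>
      linarith

theorem CoverableByIntervals.refine (h : CoverableByIntervals A w N) (hw : 0 ≤ w) (hℓ : 0 < ℓ) :
    CoverableByIntervals A ℓ (N * (w / ℓ + 1)) := by
  classical
  obtain ⟨P, hPN, hAP⟩ := h
  choose Q hQ hQcov using fun p : ℝ => coverableByIntervals_Icc p hw hℓ
  refine ⟨P.biUnion Q, ?_, fun x hx => ?_⟩
  · calc ((P.biUnion Q).card : ℝ) ≤ ∑ p ∈ P, ((Q p).card : ℝ) := by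
          exact_mod_cast Finset.card_biUnion_le
      _ ≤ ∑ _p ∈ P, (w / ℓ + 1) := Finset.sum_le_sum fun p _ => hQ p
      _ ≤ N * (w / ℓ + 1) := by
        rw [Finset.sum_const, nsmul_eq_mul]
        gcongr
  · obtain ⟨p, hp, hxp⟩ := mem_iUnion₂.1 (hAP hx)
    obtain ⟨q, hq, hxq⟩ := mem_iUnion₂.1 (hQcov p hxp)
    exact mem_iUnion₂.2 ⟨q, Finset.mem_biUnion.2 ⟨p, hp, hq⟩, hxq⟩

end CoverableByIntervals

theorem nint_nonneg (x : ℝ) : 0 ≤ nint x := abs_nonneg _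

theorem nint_le_half (x : ℝ) : nint x ≤ 1 / 2 := abs_sub_round x

theorem coverableByIntervals_nint_le (c : ℝ) {A δ : ℝ} (hA : 0 < A) (hδ : 0 ≤ δ) :
    CoverableByIntervals {x ∈ Icc (0 : ℝ) 1 | nint (A * x + c) ≤ δ} (2 * δ / A)
      (A + 2 * δ + 1) := by
  refine ⟨(Finset.Icc ⌈c - δ⌉ ⌊A + c + δ⌋).image fun m : ℤ => (m - c - δ) / A, ?_, ?_⟩
  · have hcard : (((Finset.Icc ⌈c - δ⌉ ⌊A + c + δ⌋).card : ℤ) : ℝ) ≤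
        max ((⌊A + c + δ⌋ + 1 - ⌈c - δ⌉ : ℤ) : ℝ) 0 := by
      rw [Int.card_Icc]
      exact_mod_cast (by omega)
    have := Int.floor_le (A + c + δ)
    have := Int.le_ceil (c - δ)
    calc _ ≤ ((Finset.Icc ⌈c - δ⌉ ⌊A + c + δ⌋).card : ℝ) := by
          exact_mod_cast Finset.card_image_le
      _ ≤ A + 2 * δ + 1 := by
        push_cast at hcard
        refine hcard.trans (max_le ?_ (by positivity))
        linarith
  · -- `x` is within `δ / A` of `(m - c) / A`, where `m = round (A * x + c) ∈ [c - δ, A + c + δ]`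
    rintro x ⟨hx, hxδ⟩
    set m := round (A * x + c)
    obtain ⟨hm₁, hm₂⟩ := abs_le.1 hxδ
    have hAx : A * x ≤ A := mul_le_of_le_one_right hA.le hx.2
    have hAx₀ : 0 ≤ A * x := mul_nonneg hA.le hx.1
    refine mem_iUnion₂.2 ⟨(m - c - δ) / A, Finset.mem_image.2 ⟨m, Finset.mem_Icc.2
      ⟨Int.ceil_le.2 (by linarith), Int.le_floor.2 (by linarith)⟩, rfl⟩, ?_, ?_⟩
    · rw [div_le_iff₀ hA]
      linarith
    · rw [← add_div, le_div_iff₀ hA]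
      linarith

theorem coverableByIntervals_nint_le_of_le (c : ℝ) {A δ ℓ : ℝ} (hA : 1 ≤ A) (hδ : 0 ≤ δ)
    (hδ₁ : δ ≤ 1) (hℓ : 0 < ℓ) (hℓA : ℓ ≤ 2 * δ / A) :
    CoverableByIntervals {x ∈ Icc (0 : ℝ) 1 | nint (A * x + c) ≤ δ} ℓ (16 * δ / ℓ) := by
  refine ((coverableByIntervals_nint_le c (by linarith) hδ).refine (by positivity) hℓ).mono ?_
  have h1 : 1 ≤ 2 * δ / A / ℓ := (one_le_div hℓ).2 hℓA
  calc (A + 2 * δ + 1) * (2 * δ / A / ℓ + 1) ≤ (4 * A) * (2 * (2 * δ / A / ℓ)) := by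
        gcongr <;> linarith
    _ = 16 * δ / ℓ := by field_simp; ring

theorem ediam_Icc_prod_Icc_le (p q : ℝ) {ℓ : ℝ} :
    ediam (Icc p (p + ℓ) ×ˢ Icc q (q + ℓ)) ≤ ENNReal.ofReal ℓ := by
  refine ediam_le fun x hx y hy => ?_
  rw [Prod.edist_eq]
  refine max_le ((edist_le_ediam_of_mem hx.1 hy.1).trans ?_)
    ((edist_le_ediam_of_mem hx.2 hy.2).trans ?_) <;>
    simp [Real.ediam_Icc]

theorem hausdorffApprox_prod_le {A B : Set ℝ} {ℓ N M d : ℝ} {r : ℝ≥0∞}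
    (hA : CoverableByIntervals A ℓ N) (hB : CoverableByIntervals B ℓ M) (hℓ : 0 < ℓ)
    (hd : 0 ≤ d) (hr : ENNReal.ofReal ℓ ≤ r) :
    hausdorffApprox d r (A ×ˢ B) ≤ ENNReal.ofReal (N * M * ℓ ^ d) := by
  obtain ⟨P, hPN, hAP⟩ := hA
  obtain ⟨Q, hQM, hBQ⟩ := hB
  set square : ℝ × ℝ → Set (ℝ × ℝ) := fun z => Icc z.1 (z.1 + ℓ) ×ˢ Icc z.2 (z.2 + ℓ)
  have hsquare : ∀ z, hausdorffApprox d r (square z) ≤ ENNReal.ofReal (ℓ ^ d) := fun z =>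
    (hausdorffApprox_le_ediam_rpow ((ediam_Icc_prod_Icc_le _ _).trans hr)).trans <| by
      rw [← ENNReal.ofReal_rpow_of_pos hℓ]
      exact ENNReal.rpow_le_rpow (ediam_Icc_prod_Icc_le _ _) hd
  have hcover : A ×ˢ B ⊆ ⋃ z ∈ P ×ˢ Q, square z := by
    rintro ⟨x, y⟩ ⟨hx, hy⟩
    obtain ⟨p, hp, hxp⟩ := mem_iUnion₂.1 (hAP hx)
    obtain ⟨q, hq, hyq⟩ := mem_iUnion₂.1 (hBQ hy)
    exact mem_iUnion₂.2 ⟨(p, q), Finset.mem_product.2 ⟨hp, hq⟩, hxp, hyq⟩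
  calc hausdorffApprox d r (A ×ˢ B) ≤ ∑ z ∈ P ×ˢ Q, hausdorffApprox d r (square z) :=
        (measure_mono hcover).trans (measure_biUnion_finset_le _ _)
    _ ≤ ∑ _z ∈ P ×ˢ Q, ENNReal.ofReal (ℓ ^ d) := Finset.sum_le_sum fun z _ => hsquare z
    _ ≤ ENNReal.ofReal (N * M * ℓ ^ d) := by
      rw [Finset.sum_const, Finset.card_product, nsmul_eq_mul, ← ENNReal.ofReal_natCast,
        ← ENNReal.ofReal_mul (by positivity)]
      refine ENNReal.ofReal_le_ofReal ?_
      push_cast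
      exact mul_le_mul_of_nonneg_right
        (mul_le_mul hPN hQM (Nat.cast_nonneg _) ((Nat.cast_nonneg _).trans hPN)) (by positivity)

theorem rpow_le_of_min_div_le {δ δ' b ℓ t : ℝ} (hδ : 0 < δ) (hδ' : 0 < δ') (hb : 0 < b)
    (ht : t ≤ 0) (hℓ : min δ δ' / b ≤ ℓ) : ℓ ^ t ≤ b ^ (-t) * (δ ^ t + δ' ^ t) :=
  calc ℓ ^ t ≤ (min δ δ' / b) ^ t := Real.rpow_le_rpow_of_nonpos (by positivity) hℓ ht
    _ = b ^ (-t) * min δ δ' ^ t := by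
      rw [Real.div_rpow (by positivity) hb.le, Real.rpow_neg hb.le]
      ring
    _ ≤ b ^ (-t) * (δ ^ t + δ' ^ t) := by
      gcongr
      rcases min_choice δ δ' with h | h <;> rw [h] <;>
        linarith [Real.rpow_nonneg hδ.le t, Real.rpow_nonneg hδ'.le t]

theorem hausdorffApprox_nint_box_le (c d : ℝ) {a b s δ δ' : ℝ} {r : ℝ≥0∞} (ha : 1 ≤ a)
    (hab : a ≤ b) (hs₀ : 0 ≤ s) (hs₁ : s ≤ 1) (hδ : 0 < δ) (hδ₁ : δ ≤ 1) (hδ' : 0 < δ')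
    (hδ'₁ : δ' ≤ 1) (hr : ENNReal.ofReal √(4 * δ * δ') ≤ r) :
    hausdorffApprox (1 + s) r
        ({x ∈ Icc (0 : ℝ) 1 | nint (a * x + c) ≤ δ} ×ˢ {y ∈ Icc (0 : ℝ) 1 | nint (b * y + d) ≤ δ'})
      ≤ ENNReal.ofReal (256 * δ * δ' * (b ^ (1 - s) * (δ ^ (s - 1) + δ' ^ (s - 1)))) := by
  have hb : 1 ≤ b := ha.trans hab
  set ℓ := min (2 * δ / a) (2 * δ' / b)
  have hℓ : 0 < ℓ := lt_min (by positivity) (by positivity)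
  have hℓr : ENNReal.ofReal ℓ ≤ r := by
    refine (ENNReal.ofReal_le_ofReal (Real.le_sqrt_of_sq_le ?_)).trans hr
    calc ℓ ^ 2 ≤ (2 * δ / a) * (2 * δ' / b) := by
          rw [sq]; exact mul_le_mul (min_le_left _ _) (min_le_right _ _) hℓ.le (by positivity)
      _ ≤ (2 * δ) * (2 * δ') := by gcongr <;> exact div_le_self (by positivity) ‹_›
      _ = 4 * δ * δ' := by ring
  refine (hausdorffApprox_prod_le
    (coverableByIntervals_nint_le_of_le c ha hδ.le hδ₁ hℓ (min_le_left _ _))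
    (coverableByIntervals_nint_le_of_le d hb hδ'.le hδ'₁ hℓ (min_le_right _ _))
    hℓ (by linarith) hℓr).trans (ENNReal.ofReal_le_ofReal ?_)
  have hmin : min δ δ' / b ≤ ℓ := by
    refine le_min ?_ ?_
    · calc min δ δ' / b ≤ δ / a := div_le_div₀ hδ.le (min_le_left _ _) (by linarith) hab
        _ ≤ 2 * δ / a := by gcongr; linarith
    · calc min δ δ' / b ≤ δ' / b := by gcongr; exact min_le_right _ _
        _ ≤ 2 * δ' / b := by gcongr; linarith
  have hℓs := rpow_le_of_min_div_le hδ hδ' (by linarith) (by linarith : s - 1 ≤ 0) hmin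
  rw [neg_sub] at hℓs
  calc 16 * δ / ℓ * (16 * δ' / ℓ) * ℓ ^ (1 + s) = 256 * δ * δ' * ℓ ^ (s - 1) := by
        rw [Real.rpow_add hℓ, Real.rpow_sub_one hℓ.ne', Real.rpow_one]
        field_simp
        norm_num
    _ ≤ 256 * δ * δ' * (b ^ (1 - s) * (δ ^ (s - 1) + δ' ^ (s - 1))) := by gcongr

theorem exists_dyadic_of_mul_lt {u v ψ : ℝ} {K : ℕ} (hu : u ≤ 1 / 2)
    (hv₀ : 0 ≤ v) (hv : v ≤ 1 / 2) (hK : (1 / 2 : ℝ) ^ (K + 1) < 2 * ψ) (huv : u * v < ψ) :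
    ∃ k ≤ K, u ≤ (1 / 2) ^ k ∧ v ≤ 2 * ψ / (1 / 2) ^ k := by
  by_cases hsmall : u ≤ (1 / 2) ^ K
  · refine ⟨K, le_rfl, hsmall, ?_⟩
    rw [le_div_iff₀ (by positivity)]
    rw [pow_succ] at hK
    nlinarith [mul_le_mul_of_nonneg_right hv (by positivity : (0 : ℝ) ≤ (1 / 2) ^ K)]
  · push Not at hsmall
    obtain ⟨k, hk₁, hk₂⟩ := exists_nat_pow_near_of_lt_one ((by positivity : (0 : ℝ) < _).trans
      hsmall) (by linarith) (by norm_num) (by norm_num : (1 / 2 : ℝ) < 1)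
    refine ⟨k, le_of_not_gt fun hKk => hsmall.not_ge (hk₂.trans ?_), hk₂, ?_⟩
    · exact pow_le_pow_of_le_one (by norm_num) (by norm_num) hKk.le
    · rw [le_div_iff₀ (by positivity)]
      rw [pow_succ] at hk₁
      nlinarith [mul_le_mul_of_nonneg_left hk₁.le hv₀]

theorem sum_range_pow_rpow_le {x σ : ℝ} (hx₀ : 0 < x) (hx₁ : x < 1) (hσ : 0 < σ) (n : ℕ) :
    ∑ k ∈ Finset.range n, (x ^ k) ^ σ ≤ (1 - x ^ σ)⁻¹ := by
  simp_rw [← Real.rpow_pow_comm hx₀.le]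
  simpa [← Finset.range_eq_Ico] using geom_sum_Ico_le_of_lt_one (m := 0) (n := n)
    (by positivity) (Real.rpow_lt_one hx₀.le hx₁ hσ)

theorem sum_range_pow_rpow_neg_le {x σ : ℝ} (hx₀ : 0 < x) (hx₁ : x < 1) (hσ : 0 < σ) (K : ℕ) :
    ∑ k ∈ Finset.range (K + 1), (x ^ k) ^ (-σ) ≤ (x ^ K) ^ (-σ) * (1 - x ^ σ)⁻¹ := by
  rw [← Finset.sum_range_reflect]
  calc ∑ j ∈ Finset.range (K + 1), (x ^ (K + 1 - 1 - j)) ^ (-σ)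
        = ∑ j ∈ Finset.range (K + 1), (x ^ K) ^ (-σ) * (x ^ j) ^ σ := by
          refine Finset.sum_congr rfl fun j hj => ?_
          have hK : x ^ K = x ^ (K + 1 - 1 - j) * x ^ j := by
            rw [← pow_add]; congr 1; have := Finset.mem_range.1 hj; omega
          rw [hK, Real.mul_rpow (by positivity) (by positivity), mul_assoc,
            ← Real.rpow_add (by positivity), neg_add_cancel, Real.rpow_zero, mul_one]
    _ ≤ (x ^ K) ^ (-σ) * (1 - x ^ σ)⁻¹ := by
      rw [← Finset.mul_sum]
      gcongr
      exact sum_range_pow_rpow_le hx₀ hx₁ hσ _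

theorem sum_dyadic_rpow_le {s ψ : ℝ} {K : ℕ} (hs : s < 1) (hψ : 0 < ψ)
    (hK : 2 * ψ ≤ (1 / 2) ^ K) :
    ψ * ∑ k ∈ Finset.range (K + 1), (((1 / 2 : ℝ) ^ k) ^ (s - 1) + (2 * ψ / (1 / 2) ^ k) ^ (s - 1))
      ≤ 2 * (1 - (1 / 2 : ℝ) ^ (1 - s))⁻¹ * ψ ^ s := by
  have hσ : 0 < 1 - s := by linarith
  have hq : 0 ≤ (1 - (1 / 2 : ℝ) ^ (1 - s))⁻¹ :=
    inv_nonneg.2 (sub_nonneg.2 (Real.rpow_le_one (by norm_num) (by norm_num) hσ.le))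
  have h₁ : ∑ k ∈ Finset.range (K + 1), ((1 / 2 : ℝ) ^ k) ^ (s - 1)
      ≤ (2 * ψ) ^ (s - 1) * (1 - (1 / 2 : ℝ) ^ (1 - s))⁻¹ := by
    rw [show s - 1 = -(1 - s) by ring]
    refine (sum_range_pow_rpow_neg_le (by norm_num) (by norm_num) hσ K).trans ?_
    exact mul_le_mul_of_nonneg_right
      (Real.rpow_le_rpow_of_nonpos (by positivity) hK (by linarith)) hq
  have h₂ : ∑ k ∈ Finset.range (K + 1), (2 * ψ / (1 / 2 : ℝ) ^ k) ^ (s - 1)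
      ≤ (2 * ψ) ^ (s - 1) * (1 - (1 / 2 : ℝ) ^ (1 - s))⁻¹ := by
    have hterm : ∀ k : ℕ, (2 * ψ / (1 / 2 : ℝ) ^ k) ^ (s - 1)
        = (2 * ψ) ^ (s - 1) * ((1 / 2 : ℝ) ^ k) ^ (1 - s) := fun k => by
      rw [Real.div_rpow (by positivity) (by positivity), div_eq_mul_inv,
        ← Real.rpow_neg (by positivity), neg_sub]
    simp_rw [hterm, ← Finset.mul_sum]
    gcongr
    exact sum_range_pow_rpow_le (by norm_num) (by norm_num) hσ _
  have h2 : (2 : ℝ) ^ (s - 1) ≤ 1 :=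
    Real.rpow_le_one_of_one_le_of_nonpos (by norm_num) (by linarith)
  calc ψ * ∑ k ∈ Finset.range (K + 1),
        (((1 / 2 : ℝ) ^ k) ^ (s - 1) + (2 * ψ / (1 / 2) ^ k) ^ (s - 1))
      ≤ ψ * (2 * ((2 * ψ) ^ (s - 1) * (1 - (1 / 2 : ℝ) ^ (1 - s))⁻¹)) := by
        rw [Finset.sum_add_distrib]
        gcongr
        linarith
    _ = 2 * (1 - (1 / 2 : ℝ) ^ (1 - s))⁻¹ * ψ ^ s * 2 ^ (s - 1) := by
        rw [Real.mul_rpow (by norm_num) hψ.le, Real.rpow_sub_one hψ.ne']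
        field_simp
    _ ≤ 2 * (1 - (1 / 2 : ℝ) ^ (1 - s))⁻¹ * ψ ^ s :=
        mul_le_of_le_one_right (by positivity) h2

theorem mul_div_rpow_eq {b ψ : ℝ} (s : ℝ) (hb : 0 < b) (hψ : 0 ≤ ψ) :
    b * (ψ / b) ^ s = b ^ (1 - s) * ψ ^ s := by
  rw [Real.div_rpow hψ hb.le, Real.rpow_sub hb, Real.rpow_one]
  field_simp

theorem rpow_le_mul_div_rpow {b ψ s : ℝ} (hb : 1 ≤ b) (hψ : 0 ≤ ψ) (hs : s ≤ 1) :
    ψ ^ s ≤ b * (ψ / b) ^ s := by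
  rw [mul_div_rpow_eq s (one_pos.trans_le hb) hψ]
  exact le_mul_of_one_le_left (Real.rpow_nonneg hψ s) (Real.one_le_rpow hb (by linarith))

theorem setOf_nint_mul_lt_subset (a b c d : ℝ) {ψ : ℝ} {K : ℕ}
    (hK : (1 / 2 : ℝ) ^ (K + 1) < 2 * ψ) :
    {p : ℝ × ℝ | p.1 ∈ Icc (0 : ℝ) 1 ∧ p.2 ∈ Icc (0 : ℝ) 1 ∧
        nint (a * p.1 + c) * nint (b * p.2 + d) < ψ}
      ⊆ ⋃ k ∈ Finset.range (K + 1), {x ∈ Icc (0 : ℝ) 1 | nint (a * x + c) ≤ (1 / 2) ^ k} ×ˢ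
          {y ∈ Icc (0 : ℝ) 1 | nint (b * y + d) ≤ 2 * ψ / (1 / 2) ^ k} := by
  rintro p ⟨hx, hy, hp⟩
  obtain ⟨k, hk, hu, hv⟩ :=
    exists_dyadic_of_mul_lt (nint_le_half _) (nint_nonneg _) (nint_le_half _) hK hp
  exact mem_iUnion₂.2 ⟨k, Finset.mem_range_succ_iff.2 hk, ⟨hx, hu⟩, hy, hv⟩

theorem hausdorffApprox_dyadic_box_le (c d : ℝ) {a b s ψ : ℝ} {r : ℝ≥0∞} {k : ℕ} (ha : 1 ≤ a)
    (hab : a ≤ b) (hs₀ : 0 ≤ s) (hs₁ : s ≤ 1) (hψ : 0 < ψ) (hk : 2 * ψ ≤ (1 / 2) ^ k)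
    (hr : ENNReal.ofReal √(8 * ψ) ≤ r) :
    hausdorffApprox (1 + s) r ({x ∈ Icc (0 : ℝ) 1 | nint (a * x + c) ≤ (1 / 2) ^ k} ×ˢ
        {y ∈ Icc (0 : ℝ) 1 | nint (b * y + d) ≤ 2 * ψ / (1 / 2) ^ k})
      ≤ ENNReal.ofReal (512 * b ^ (1 - s) *
          (ψ * (((1 / 2 : ℝ) ^ k) ^ (s - 1) + (2 * ψ / (1 / 2) ^ k) ^ (s - 1)))) := by
  have h8 : 4 * (1 / 2 : ℝ) ^ k * (2 * ψ / (1 / 2) ^ k) = 8 * ψ := by field_simp; ring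
  refine (hausdorffApprox_nint_box_le c d ha hab hs₀ hs₁ (by positivity)
    (pow_le_one₀ (by norm_num) (by norm_num)) (by positivity)
    ((div_le_one (by positivity)).2 hk) (h8 ▸ hr)).trans_eq ?_
  congr 1
  field_simp
  ring

theorem hausdorffApprox_nint_mul_lt_le (c d : ℝ) {a b s ψ : ℝ} {r : ℝ≥0∞} (ha : 1 ≤ a)
    (hab : a ≤ b) (hs₀ : 0 ≤ s) (hs₁ : s < 1) (hψ₀ : 0 ≤ ψ) (hψ : ψ ≤ 1 / 2)
    (hr : ENNReal.ofReal √(8 * ψ) ≤ r) :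
    hausdorffApprox (1 + s) r {p : ℝ × ℝ | p.1 ∈ Icc (0 : ℝ) 1 ∧ p.2 ∈ Icc (0 : ℝ) 1 ∧
        nint (a * p.1 + c) * nint (b * p.2 + d) < ψ}
      ≤ ENNReal.ofReal (1024 * (1 - (1 / 2 : ℝ) ^ (1 - s))⁻¹ * (b * (ψ / b) ^ s)) := by
  rcases hψ₀.eq_or_lt with rfl | hψ₀
  · refine (measure_mono (t := ∅) fun p hp =>
      ((mul_nonneg (nint_nonneg _) (nint_nonneg _)).not_gt hp.2.2).elim).trans ?_
    simp
  have hb : 0 < b := one_pos.trans_le (ha.trans hab)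
  obtain ⟨K, hK₁, hK₂⟩ := exists_nat_pow_near_of_lt_one (by positivity : (0 : ℝ) < 2 * ψ)
    (by linarith) (by norm_num) (by norm_num : (1 / 2 : ℝ) < 1)
  set box : ℕ → Set (ℝ × ℝ) := fun k =>
    {x ∈ Icc (0 : ℝ) 1 | nint (a * x + c) ≤ (1 / 2) ^ k} ×ˢ
      {y ∈ Icc (0 : ℝ) 1 | nint (b * y + d) ≤ 2 * ψ / (1 / 2) ^ k}
  set term : ℕ → ℝ := fun k => ((1 / 2 : ℝ) ^ k) ^ (s - 1) + (2 * ψ / (1 / 2) ^ k) ^ (s - 1)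
  have hbox : ∀ k ∈ Finset.range (K + 1),
      hausdorffApprox (1 + s) r (box k) ≤ ENNReal.ofReal (512 * b ^ (1 - s) * (ψ * term k)) :=
    fun k hk => hausdorffApprox_dyadic_box_le c d ha hab hs₀ hs₁.le hψ₀
      (hK₂.trans (pow_le_pow_of_le_one (by norm_num) (by norm_num)
        (Finset.mem_range_succ_iff.1 hk))) hr
  calc _ ≤ ∑ k ∈ Finset.range (K + 1), hausdorffApprox (1 + s) r (box k) :=
        (measure_mono (setOf_nint_mul_lt_subset a b c d hK₁)).trans
          (measure_biUnion_finset_le _ _)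
    _ ≤ ∑ k ∈ Finset.range (K + 1), ENNReal.ofReal (512 * b ^ (1 - s) * (ψ * term k)) :=
        Finset.sum_le_sum hbox
    _ = ENNReal.ofReal (512 * b ^ (1 - s) * (ψ * ∑ k ∈ Finset.range (K + 1), term k)) := by
        rw [← ENNReal.ofReal_sum_of_nonneg fun k _ => by simp only [term]; positivity,
          Finset.mul_sum, Finset.mul_sum]
    _ ≤ ENNReal.ofReal (1024 * (1 - (1 / 2 : ℝ) ^ (1 - s))⁻¹ * (b * (ψ / b) ^ s)) := by
        refine ENNReal.ofReal_le_ofReal ?_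
        rw [mul_div_rpow_eq s hb hψ₀.le]
        calc 512 * b ^ (1 - s) * (ψ * ∑ k ∈ Finset.range (K + 1), term k)
            ≤ 512 * b ^ (1 - s) * (2 * (1 - (1 / 2 : ℝ) ^ (1 - s))⁻¹ * ψ ^ s) :=
              mul_le_mul_of_nonneg_left (sum_dyadic_rpow_le hs₁ hψ₀ hK₂) (by positivity)
          _ = 1024 * (1 - (1 / 2 : ℝ) ^ (1 - s))⁻¹ * (b ^ (1 - s) * ψ ^ s) := by ring

theorem tendsto_nhds_zero_of_tendsto_rpow {ι : Type*} {l : Filter ι} {f : ι → ℝ} {s : ℝ}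
    (hf : ∀ i, 0 ≤ f i) (hs : 0 < s) (h : Tendsto (fun i => f i ^ s) l (𝓝 0)) :
    Tendsto f l (𝓝 0) := by
  have := h.rpow_const (p := s⁻¹) (Or.inr (inv_nonneg.2 hs.le))
  simpa [← Real.rpow_mul (hf _), mul_inv_cancel₀ hs.ne', Real.zero_rpow (inv_ne_zero hs.ne')]
    using this

theorem setOf_and_infinite_eq_limsup {α : Type*} (Q : α → Prop) (P : ℕ → α → Prop) :
    {x | Q x ∧ {n | P n x}.Infinite} = limsup (fun n => {x | Q x ∧ P n x}) atTop := by
  ext x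
  simp only [mem_limsup_iff_frequently_mem, ← Nat.frequently_atTop_iff_infinite, mem_ofPred_eq]
  refine ⟨fun ⟨hx, h⟩ => h.mono fun n hn => ⟨hx, hn⟩, fun h => ?_⟩
  obtain ⟨n, hx, -⟩ := h.exists
  exact ⟨hx, h.mono fun n hn => hn.2⟩

theorem stmt13 (a b c d : ℕ → ℝ) (ψ : ℕ → ℝ)
    (ha : ∀ n, 1 ≤ a n) (hab : ∀ n, a n ≤ b n) (hψ : ∀ n, 0 ≤ ψ n)
    (s : ℝ) (hs0 : 0 < s) (hs1 : s < 1)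
    (hsum : Summable (fun n => b n * (ψ n / b n) ^ s)) :
    μH[1 + s] {p : ℝ × ℝ | p.1 ∈ Icc (0:ℝ) 1 ∧ p.2 ∈ Icc (0:ℝ) 1 ∧
      {n : ℕ | nint (a n * p.1 + c n) * nint (b n * p.2 + d n) < ψ n}.Infinite} = 0 := by
  have hlimsup := setOf_and_infinite_eq_limsup (fun p : ℝ × ℝ => p.1 ∈ Icc (0 : ℝ) 1 ∧
    p.2 ∈ Icc (0 : ℝ) 1) fun n p => nint (a n * p.1 + c n) * nint (b n * p.2 + d n) < ψ n
  simp only [and_assoc] at hlimsup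
  have hψ₀ : Tendsto ψ atTop (𝓝 0) := tendsto_nhds_zero_of_tendsto_rpow hψ hs0 <|
    squeeze_zero (fun n => Real.rpow_nonneg (hψ n) s)
      (fun n => rpow_le_mul_div_rpow ((ha n).trans (hab n)) (hψ n) hs1.le)
      hsum.tendsto_atTop_zero
  have hdiam : Tendsto (fun n => ENNReal.ofReal √(8 * ψ n)) atTop (𝓝 0) := by
    simpa using ENNReal.tendsto_ofReal (hψ₀.const_mul 8).sqrt
  rw [hlimsup]
  refine hausdorffMeasure_limsup_eq_zero
    (hsum.mul_left (1024 * (1 - (1 / 2 : ℝ) ^ (1 - s))⁻¹)).tsum_ofReal_ne_top fun r hr => ?_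
  filter_upwards [hψ₀.eventually_le_const (by norm_num : (0 : ℝ) < 1 / 2),
    hdiam.eventually_lt_const hr] with n hn hrn
  exact hausdorffApprox_nint_mul_lt_le (c n) (d n) (ha n) (hab n) hs0.le hs1 (hψ n) hn hrn.le
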